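/- arXiv:2308.05065 — 3 statements merged into one kernel-verified Lean document; each statement's English description precedes it below -/
import Mathlib

section
/- Let μ, ν be Borel probability measures on R^{n+1} with finite second moment. Then ν is a translate of μ (i.e., ν = (t_v)_#μ for some v ∈ R^{n+1}) if and only if d_{W₂}(μ, ν) = ‖m(ν) − m(μ)‖. -/
open MeasureTheory

/-- The squared quadratic Wasserstein distance, as the infimum of transport costs
over all couplings. -/
noncomputable def W2sq {E : Type*} [NormedAddCommGroup E] [MeasurableSpace E]
    (μ ν : Measure E) : ℝ :=
  sInf {c : ℝ | ∃ π : Measure (E × E), IsProbabilityMeasure π ∧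
    π.map Prod.fst = μ ∧ π.map Prod.snd = ν ∧ c = ∫ p, ‖p.1 - p.2‖^2 ∂π}

/-- The quadratic Wasserstein distance. -/
noncomputable def W2dist {E : Type*} [NormedAddCommGroup E] [MeasurableSpace E]
    (μ ν : Measure E) : ℝ :=
  Real.sqrt (W2sq μ ν)

/-! For a coupling `π` of `μ` and `ν` and `v = m(ν) - m(μ)`, the bias–variance decomposition reads
`∫ ‖x - y‖² dπ = ‖v‖² + ∫ ‖x + v - y‖² dπ`. Hence `W₂² ≥ ‖v‖²`, with equality for `ν = (t_v)_#μ`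
through the coupling `(x, x + v)`. Conversely, if `W₂² = ‖v‖²`, there are couplings along which
`x + v - y` is arbitrarily small in `L²`, hence in `L¹`; as `x ↦ exp (i⟪x, t⟫)` is `‖t‖`-Lipschitz,
the characteristic functions of `(t_v)_#μ` and `ν` agree, so these measures are equal. -/

open Complex
open scoped RealInnerProductSpace

section SecondMoment

variable {Ω E : Type*} {mΩ : MeasurableSpace Ω} {P : Measure Ω} [IsProbabilityMeasure P]
  [NormedAddCommGroup E]

lemma integral_norm_sq_eq_norm_integral_sq_add [InnerProductSpace ℝ E] [CompleteSpace E]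
    {f : Ω → E} (hf : MemLp f 2 P) :
    ∫ ω, ‖f ω‖ ^ 2 ∂P = ‖∫ ω, f ω ∂P‖ ^ 2 + ∫ ω, ‖f ω - ∫ ω', f ω' ∂P‖ ^ 2 ∂P := by
  set c := ∫ ω, f ω ∂P
  have hf1 : Integrable f P := hf.integrable one_le_two
  have hf2 : Integrable (fun ω => ‖f ω‖ ^ 2) P := hf.integrable_norm_pow two_ne_zero
  have hinner : Integrable (fun ω => 2 * ⟪c, f ω⟫) P := (hf1.const_inner c).const_mul 2
  have hdiff : Integrable (fun ω => ‖f ω‖ ^ 2 - 2 * ⟪c, f ω⟫) P := hf2.sub hinner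
  simp_rw [norm_sub_sq_real, real_inner_comm c]
  rw [integral_add hdiff (integrable_const _), integral_sub hf2 hinner,
    integral_const_mul, integral_inner hf1, real_inner_self_eq_norm_sq]
  simp
  ring

lemma sq_integral_norm_le_integral_norm_sq {f : Ω → E} (hf : MemLp f 2 P) :
    (∫ ω, ‖f ω‖ ∂P) ^ 2 ≤ ∫ ω, ‖f ω‖ ^ 2 ∂P := by
  have h := integral_norm_sq_eq_norm_integral_sq_add hf.norm
  simp only [Real.norm_eq_abs, sq_abs] at h
  rw [h]
  exact le_add_of_nonneg_right (integral_nonneg fun _ => sq_nonneg _)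

end SecondMoment

section W2sq

variable {E : Type*} [NormedAddCommGroup E] [MeasurableSpace E] {μ ν : Measure E}

lemma W2sq_nonneg (μ ν : Measure E) : 0 ≤ W2sq μ ν :=
  Real.sInf_nonneg <| by
    rintro _ ⟨π, -, -, -, rfl⟩
    exact integral_nonneg fun _ => sq_nonneg _

lemma W2sq_le_integral {π : Measure (E × E)} [IsProbabilityMeasure π]
    (h1 : π.map Prod.fst = μ) (h2 : π.map Prod.snd = ν) :
    W2sq μ ν ≤ ∫ p, ‖p.1 - p.2‖ ^ 2 ∂π := by
  refine csInf_le ⟨0, ?_⟩ ⟨π, inferInstance, h1, h2, rfl⟩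
  rintro _ ⟨π, -, -, -, rfl⟩
  exact integral_nonneg fun _ => sq_nonneg _

variable [IsProbabilityMeasure μ] [IsProbabilityMeasure ν]

lemma le_W2sq {c : ℝ}
    (h : ∀ π : Measure (E × E), IsProbabilityMeasure π → π.map Prod.fst = μ →
      π.map Prod.snd = ν → c ≤ ∫ p, ‖p.1 - p.2‖ ^ 2 ∂π) :
    c ≤ W2sq μ ν := by
  refine le_csInf
    ⟨∫ p, ‖p.1 - p.2‖ ^ 2 ∂(μ.prod ν), μ.prod ν, inferInstance, by simp, by simp, rfl⟩ ?_
  rintro _ ⟨π, hπ, h1, h2, rfl⟩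
  exact h π hπ h1 h2

lemma exists_integral_lt_of_W2sq_lt {c : ℝ} (h : W2sq μ ν < c) :
    ∃ π : Measure (E × E), IsProbabilityMeasure π ∧ π.map Prod.fst = μ ∧
      π.map Prod.snd = ν ∧ ∫ p, ‖p.1 - p.2‖ ^ 2 ∂π < c := by
  by_contra! hge
  exact h.not_ge (le_W2sq hge)

end W2sq

section Coupling

variable {E : Type*} [NormedAddCommGroup E] [MeasurableSpace E]
  {μ ν : Measure E} {π : Measure (E × E)}

lemma memLp_fst_sub_snd (hμ : MemLp id 2 μ) (hν : MemLp id 2 ν)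
    (h1 : π.map Prod.fst = μ) (h2 : π.map Prod.snd = ν) :
    MemLp (fun p : E × E => p.1 - p.2) 2 π :=
  (hμ.comp_measurePreserving ⟨measurable_fst, h1⟩).sub
    (hν.comp_measurePreserving ⟨measurable_snd, h2⟩)

lemma memLp_fst_add_sub_snd [IsFiniteMeasure π] (hμ : MemLp id 2 μ) (hν : MemLp id 2 ν)
    (h1 : π.map Prod.fst = μ) (h2 : π.map Prod.snd = ν) (v : E) :
    MemLp (fun p : E × E => p.1 + v - p.2) 2 π := by
  convert (memLp_fst_sub_snd hμ hν h1 h2).add (memLp_const v) using 1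
  funext p
  simp only [Pi.add_apply]
  abel

lemma integral_fst_sub_snd [NormedSpace ℝ E] [IsProbabilityMeasure π]
    (hμ : MemLp id 2 μ) (hν : MemLp id 2 ν)
    (h1 : π.map Prod.fst = μ) (h2 : π.map Prod.snd = ν) :
    ∫ p : E × E, (p.1 - p.2) ∂π = ∫ x, x ∂μ - ∫ y, y ∂ν := by
  have hfst : Integrable (fun p : E × E => p.1) π :=
    (hμ.comp_measurePreserving ⟨measurable_fst, h1⟩).integrable one_le_two
  have hsnd : Integrable (fun p : E × E => p.2) π :=
    (hν.comp_measurePreserving ⟨measurable_snd, h2⟩).integrable one_le_two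
  subst h1 h2
  rw [integral_sub hfst hsnd, integral_map (f := fun x => x) measurable_fst.aemeasurable hμ.1,
    integral_map (f := fun x => x) measurable_snd.aemeasurable hν.1]

variable [InnerProductSpace ℝ E] [CompleteSpace E]

lemma integral_norm_fst_sub_snd_sq [IsProbabilityMeasure π]
    (hμ : MemLp id 2 μ) (hν : MemLp id 2 ν)
    (h1 : π.map Prod.fst = μ) (h2 : π.map Prod.snd = ν) :
    ∫ p, ‖p.1 - p.2‖ ^ 2 ∂π = ‖∫ y, y ∂ν - ∫ x, x ∂μ‖ ^ 2 +
      ∫ p, ‖p.1 + (∫ y, y ∂ν - ∫ x, x ∂μ) - p.2‖ ^ 2 ∂π := by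
  rw [integral_norm_sq_eq_norm_integral_sq_add (memLp_fst_sub_snd hμ hν h1 h2),
    integral_fst_sub_snd hμ hν h1 h2, norm_sub_rev]
  congr 1
  refine integral_congr_ae (Filter.Eventually.of_forall fun p => ?_)
  simp only
  congr 2
  abel

lemma sq_norm_integral_sub_le_W2sq [IsProbabilityMeasure μ] [IsProbabilityMeasure ν]
    (hμ : MemLp id 2 μ) (hν : MemLp id 2 ν) :
    ‖∫ y, y ∂ν - ∫ x, x ∂μ‖ ^ 2 ≤ W2sq μ ν :=
  le_W2sq fun _ _ h1 h2 => (integral_norm_fst_sub_snd_sq hμ hν h1 h2).symm ▸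
    le_add_of_nonneg_right (integral_nonneg fun _ => sq_nonneg _)

end Coupling

section Translation

variable {E : Type*} [NormedAddCommGroup E] [MeasurableSpace E] [BorelSpace E]
  [SecondCountableTopology E] {μ : Measure E} [IsProbabilityMeasure μ]

lemma W2sq_map_add_const_le (v : E) : W2sq μ (μ.map (· + v)) ≤ ‖v‖ ^ 2 := by
  have : IsProbabilityMeasure (μ.map fun x => (x, x + v)) :=
    Measure.isProbabilityMeasure_map (by fun_prop)
  refine (W2sq_le_integral (π := μ.map fun x => (x, x + v)) ?_ ?_).trans_eq ?_
  · rw [Measure.map_map measurable_fst (by fun_prop)]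
    exact Measure.map_id'
  · rw [Measure.map_map measurable_snd (by fun_prop)]
    rfl
  · rw [integral_map (by fun_prop) (by fun_prop)]
    simp

lemma integral_map_add_const [NormedSpace ℝ E] [CompleteSpace E] (hμ : Integrable id μ) (v : E) :
    ∫ y, y ∂(μ.map (· + v)) = ∫ x, x ∂μ + v := by
  rw [integral_map (f := fun y => y) (by fun_prop) aestronglyMeasurable_id,
    integral_add (f := fun x => x) hμ (integrable_const v)]
  simp

variable [InnerProductSpace ℝ E] [CompleteSpace E]

lemma W2sq_map_add_const (hμ : MemLp id 2 μ) (v : E) :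
    W2sq μ (μ.map (· + v)) = ‖v‖ ^ 2 := by
  refine (W2sq_map_add_const_le v).antisymm ?_
  have hμv : MemLp id 2 (μ.map (· + v)) :=
    (memLp_map_measure_iff aestronglyMeasurable_id (by fun_prop)).2 (hμ.add (memLp_const v))
  have := Measure.isProbabilityMeasure_map (μ := μ) (f := (· + v)) (by fun_prop)
  simpa [integral_map_add_const (hμ.integrable one_le_two)] using
    sq_norm_integral_sub_le_W2sq hμ hμv

end Translation

lemma norm_integral_sub_integral_le_of_lipschitzWith {Ω E F : Type*} {mΩ : MeasurableSpace Ω}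
    {P : Measure Ω} [NormedAddCommGroup E] [NormedAddCommGroup F] [NormedSpace ℝ F]
    {g : E → F} {K : NNReal} (hg : LipschitzWith K g) {X Y : Ω → E}
    (hX : Integrable (fun ω => g (X ω)) P) (hY : Integrable (fun ω => g (Y ω)) P)
    (hXY : Integrable (fun ω => ‖X ω - Y ω‖) P) :
    ‖∫ ω, g (X ω) ∂P - ∫ ω, g (Y ω) ∂P‖ ≤ K * ∫ ω, ‖X ω - Y ω‖ ∂P := by
  rw [← integral_sub hX hY, ← integral_const_mul]
  exact norm_integral_le_of_norm_le (hXY.const_mul K)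
    (Filter.Eventually.of_forall fun ω => hg.norm_sub_le _ _)

lemma lipschitzWith_cexp_inner_mul_I {E : Type*} [NormedAddCommGroup E] [InnerProductSpace ℝ E]
    (t : E) : LipschitzWith ‖t‖₊ fun x : E => cexp (⟪x, t⟫ * I) := by
  refine LipschitzWith.of_dist_le_mul fun x y => ?_
  have hexp : cexp (⟪x, t⟫ * I) - cexp (⟪y, t⟫ * I) =
      cexp (⟪y, t⟫ * I) * (cexp (I * ⟪x - y, t⟫) - 1) := by
    rw [mul_sub, mul_one, ← Complex.exp_add, inner_sub_left]
    congr 2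
    push_cast
    ring
  rw [dist_eq_norm, hexp, norm_mul, Complex.norm_exp_ofReal_mul_I, one_mul, coe_nnnorm,
    dist_eq_norm]
  calc _ ≤ ‖⟪x - y, t⟫‖ := Real.norm_exp_I_mul_ofReal_sub_one_le
    _ ≤ ‖t‖ * ‖x - y‖ := by rw [mul_comm]; exact norm_inner_le_norm _ _

lemma norm_charFun_map_add_const_sub_le {E : Type*} [NormedAddCommGroup E]
    [InnerProductSpace ℝ E] [MeasurableSpace E] [BorelSpace E] [SecondCountableTopology E]
    {μ ν : Measure E} {π : Measure (E × E)} [IsProbabilityMeasure π]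
    (hμ : MemLp id 2 μ) (hν : MemLp id 2 ν)
    (h1 : π.map Prod.fst = μ) (h2 : π.map Prod.snd = ν) (v t : E) :
    ‖charFun (μ.map (· + v)) t - charFun ν t‖ ≤ ‖t‖ * ∫ p, ‖p.1 + v - p.2‖ ∂π := by
  have hbdd : ∀ X : E × E → E, Continuous X →
      Integrable (fun p => cexp (⟪X p, t⟫ * I)) π := fun X hX =>
    .of_bound (by fun_prop) 1 (Filter.Eventually.of_forall fun p => by
      rw [Complex.norm_exp_ofReal_mul_I])
  subst h1 h2
  rw [charFun_apply, charFun_apply, Measure.map_map (by fun_prop) measurable_fst,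
    integral_map (by fun_prop) (by fun_prop), integral_map measurable_snd.aemeasurable
      (by fun_prop)]
  simp only [Function.comp_apply]
  exact norm_integral_sub_integral_le_of_lipschitzWith (lipschitzWith_cexp_inner_mul_I t)
    (hbdd _ (by fun_prop)) (hbdd _ continuous_snd)
    ((memLp_fst_add_sub_snd hμ hν rfl rfl v).integrable one_le_two).norm

section Converse

variable {E : Type*} [NormedAddCommGroup E] [InnerProductSpace ℝ E] [CompleteSpace E]
  [MeasurableSpace E] {μ ν : Measure E} [IsProbabilityMeasure μ] [IsProbabilityMeasure ν]

lemma exists_coupling_integral_norm_add_sub_lt (hμ : MemLp id 2 μ) (hν : MemLp id 2 ν)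
    (hW : W2sq μ ν ≤ ‖∫ y, y ∂ν - ∫ x, x ∂μ‖ ^ 2) {δ : ℝ} (hδ : 0 < δ) :
    ∃ π : Measure (E × E), IsProbabilityMeasure π ∧ π.map Prod.fst = μ ∧
      π.map Prod.snd = ν ∧ ∫ p, ‖p.1 + (∫ y, y ∂ν - ∫ x, x ∂μ) - p.2‖ ∂π < δ := by
  obtain ⟨π, hπ, h1, h2, hlt⟩ := exists_integral_lt_of_W2sq_lt
    (hW.trans_lt (lt_add_of_pos_right _ (pow_pos hδ 2)))
  refine ⟨π, hπ, h1, h2, ?_⟩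
  rw [integral_norm_fst_sub_snd_sq hμ hν h1 h2, add_lt_add_iff_left] at hlt
  have hjensen := sq_integral_norm_le_integral_norm_sq (memLp_fst_add_sub_snd hμ hν h1 h2
    (∫ y, y ∂ν - ∫ x, x ∂μ))
  exact (pow_lt_pow_iff_left₀ (integral_nonneg fun _ => norm_nonneg _) hδ.le two_ne_zero).1
    (hjensen.trans_lt hlt)

variable [BorelSpace E] [SecondCountableTopology E]

lemma charFun_map_add_const_eq_of_W2sq_le (hμ : MemLp id 2 μ) (hν : MemLp id 2 ν)
    (hW : W2sq μ ν ≤ ‖∫ y, y ∂ν - ∫ x, x ∂μ‖ ^ 2) :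
    charFun (μ.map (· + (∫ y, y ∂ν - ∫ x, x ∂μ))) = charFun ν := by
  funext t
  refine sub_eq_zero.1 (norm_le_zero_iff.1 (le_of_forall_pos_le_add fun ε hε => ?_))
  obtain ⟨π, hπ, h1, h2, hlt⟩ :=
    exists_coupling_integral_norm_add_sub_lt hμ hν hW (δ := ε / (‖t‖ + 1)) (by positivity)
  calc _ ≤ ‖t‖ * (ε / (‖t‖ + 1)) :=
        (norm_charFun_map_add_const_sub_le hμ hν h1 h2 _ t).trans
          (mul_le_mul_of_nonneg_left hlt.le (norm_nonneg t))
    _ ≤ 0 + ε := by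
        rw [zero_add, mul_div_assoc', div_le_iff₀ (by positivity)]
        nlinarith

end Converse

theorem stmt_6 (n : ℕ) (μ ν : Measure (EuclideanSpace ℝ (Fin (n+1))))
    [IsProbabilityMeasure μ] [IsProbabilityMeasure ν]
    (hμ : Integrable (fun x => ‖x‖^2) μ) (hν : Integrable (fun x => ‖x‖^2) ν) :
    (∃ v : EuclideanSpace ℝ (Fin (n+1)), ν = μ.map (fun x => x + v))
      ↔ W2dist μ ν = ‖(∫ y, y ∂ν) - ∫ y, y ∂μ‖ := by
  have hμ2 : MemLp id 2 μ := (memLp_two_iff_integrable_sq_norm aestronglyMeasurable_id).2 hμ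
  have hν2 : MemLp id 2 ν := (memLp_two_iff_integrable_sq_norm aestronglyMeasurable_id).2 hν
  constructor
  · rintro ⟨v, rfl⟩
    rw [W2dist, W2sq_map_add_const hμ2, integral_map_add_const (hμ2.integrable one_le_two),
      add_sub_cancel_left, Real.sqrt_sq (norm_nonneg v)]
  · intro h
    have hW : W2sq μ ν = ‖∫ y, y ∂ν - ∫ x, x ∂μ‖ ^ 2 := by
      rw [← h, W2dist, Real.sq_sqrt (W2sq_nonneg μ ν)]
    exact ⟨_, (Measure.ext_of_charFun (charFun_map_add_const_eq_of_W2sq_le hμ2 hν2 hW.le)).symm⟩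
end

section
/- For α ∈ [0,1], x, y ∈ S^n with (1−α)x + αy ≠ 0, the unique z ∈ S^n minimizing (1−α)‖x−z‖² + α‖z−y‖² is p_α(x,y) = ((1−α)x + αy)/‖(1−α)x + αy‖. -/
open RealInnerProductSpace

theorem stmt_8 (n : ℕ) (α : ℝ) (hα : α ∈ Set.Icc (0:ℝ) 1)
    (x y : EuclideanSpace ℝ (Fin (n+1)))
    (hx : x ∈ Metric.sphere (0 : EuclideanSpace ℝ (Fin (n+1))) 1)
    (hy : y ∈ Metric.sphere (0 : EuclideanSpace ℝ (Fin (n+1))) 1)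
    (hne : (1 - α) • x + α • y ≠ 0)
    (z : EuclideanSpace ℝ (Fin (n+1)))
    (hz : z ∈ Metric.sphere (0 : EuclideanSpace ℝ (Fin (n+1))) 1)
    (hmin : (1 - α) * ‖x - z‖^2 + α * ‖z - y‖^2
      = 2 * (1 - ‖(1 - α) • x + α • y‖)) :
    z = ‖(1 - α) • x + α • y‖⁻¹ • ((1 - α) • x + α • y) := by
  have hx1 : ‖x‖ = 1 := by simpa using hx
  have hy1 : ‖y‖ = 1 := by simpa using hy
  have hz1 : ‖z‖ = 1 := by simpa using hz
  set w := (1 - α) • x + α • y with hw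
  have h1 : ‖x - z‖^2 = 2 - 2 * ⟪x, z⟫ := by
    rw [norm_sub_sq_real, hx1, hz1]; ring
  have h2 : ‖z - y‖^2 = 2 - 2 * ⟪y, z⟫ := by
    rw [norm_sub_sq_real, hz1, hy1, real_inner_comm]; ring
  have h3 : ⟪w, z⟫ = (1 - α) * ⟪x, z⟫ + α * ⟪y, z⟫ := by
    rw [hw, inner_add_left, real_inner_smul_left, real_inner_smul_left]
  have hinner : ⟪w, z⟫ = ‖w‖ * ‖z‖ := by
    rw [hz1]; linear_combination h3 - (1/2)*hmin + ((1-α)/2)*h1 + (α/2)*h2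
  have heq := (inner_eq_norm_mul_iff_real).1 hinner
  rw [hz1, one_smul] at heq
  have hm : ‖w‖ ≠ 0 := norm_ne_zero_iff.2 hne
  nth_rewrite 2 [heq]
  rw [smul_smul, inv_mul_cancel₀ hm, one_smul]
end

section
/- Let p ∈ [1, 2). For every integer k ≥ 1, the coefficient of z^k (and of z^{−k}) in the Laurent expansion of f_p(z) = |(z−1)/2|^p = (1 − (2 + z + z^{−1})/4)^{p/2} on the unit circle is strictly negative. -/
open MeasureTheory

/-- The `k`-th Laurent (Fourier) coefficient of a function on the unit circle,
written in the angular variable: `c_k = (1/(2π)) ∫_0^{2π} f(e^{iθ}) e^{-ikθ} dθ`. -/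
noncomputable def laurentCoeff (f : ℂ → ℝ) (k : ℤ) : ℂ :=
  (1 / (2 * Real.pi) : ℂ) *
    ∫ θ in (0:ℝ)..(2 * Real.pi),
      (f (Complex.exp (θ * Complex.I)) : ℂ) * Complex.exp (-(k : ℂ) * θ * Complex.I)

/-!
On the circle `z = exp (θ * I)` one has `‖(z - 1) / 2‖ ^ p = (1 - x) ^ (p / 2)` with
`x = cos (θ / 2) ^ 2 = (z + 2 + z⁻¹) / 4`. Expanding by the binomial series, the `ℓ`-th Laurent
coefficient is `∑ₘ C(p/2, m) (-1/4)ᵐ C(2m, m + ℓ)`. For `0 < p/2 < 1` the numbers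
`(-1)ᵐ C(p/2, m)`, `m ≥ 1`, are all negative, the term `m = 0` vanishes when `ℓ ≠ 0`, and the
term `m = |ℓ|` is nonzero. Since also `∑ₘ |C(p/2, m)| ≤ 2`, the series may be integrated term by
term.
-/

open Finset Complex

namespace Ring

theorem succ_mul_choose_succ {R : Type*} [Field R] [CharZero R] (a : R) (m : ℕ) :
    (m + 1 : R) * choose a (m + 1) = choose a m * (a - m) := by
  simpa [Nat.choose_succ_self_right, choose_one_right] using choose_smul_choose a (Nat.le_succ m)

theorem neg_one_pow_mul_choose_neg {a : ℝ} (ha₀ : 0 < a) (ha₁ : a < 1) {m : ℕ} (hm : m ≠ 0) :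
    (-1) ^ m * choose a m < 0 := by
  induction m with
  | zero => exact absurd rfl hm
  | succ n ih =>
    rcases n.eq_zero_or_pos with rfl | hn
    · simpa [choose_one_right]
    have hrec := succ_mul_choose_succ a n
    have hn' : (1 : ℝ) ≤ n := by exact_mod_cast hn
    have key : (n + 1 : ℝ) * ((-1) ^ (n + 1) * choose a (n + 1))
        = ((-1) ^ n * choose a n) * (n - a) := by
      rw [pow_succ, mul_left_comm, mul_assoc, hrec]; ring
    have : (n + 1 : ℝ) * ((-1) ^ (n + 1) * choose a (n + 1)) < 0 :=
      key ▸ mul_neg_of_neg_of_pos (ih hn.ne') (by linarith)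
    exact neg_of_mul_neg_right this (by positivity)

theorem abs_choose_eq_neg_neg_one_pow_mul {a : ℝ} (ha₀ : 0 < a) (ha₁ : a < 1) {m : ℕ} (hm : m ≠ 0) :
    |choose a m| = -((-1) ^ m * choose a m) := by
  rw [← abs_of_neg (neg_one_pow_mul_choose_neg ha₀ ha₁ hm), abs_mul, abs_pow, abs_neg, abs_one,
    one_pow, one_mul]

end Ring

theorem Real.hasSum_choose_mul_pow {a y : ℝ} (hy : |y| < 1) :
    HasSum (fun m => Ring.choose a m * y ^ m) ((1 + y) ^ a) := by
  have h := Real.one_add_rpow_hasFPowerSeriesOnBall_zero (a := a) |>.hasSum (y := y)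
    (by simpa [enorm_eq_nnnorm, ← NNReal.coe_lt_one] using hy)
  simpa [binomialSeries, FormalMultilinearSeries.ofScalars_apply_eq, mul_comm] using h

theorem Real.hasSum_abs_choose_mul_pow {a x : ℝ} (ha₀ : 0 < a) (ha₁ : a < 1) (hx₀ : 0 ≤ x)
    (hx₁ : x < 1) : HasSum (fun m => |Ring.choose a m| * x ^ m) (2 - (1 - x) ^ a) := by
  have h := ((Real.hasSum_choose_mul_pow (a := a) (y := -x)
    (by rwa [abs_neg, abs_of_nonneg hx₀])).neg).add (hasSum_ite_eq 0 (2 : ℝ))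
  have hterm : (fun m => |Ring.choose a m| * x ^ m)
      = fun m => -(Ring.choose a m * (-x) ^ m) + if m = 0 then 2 else 0 := by
    funext m
    rcases eq_or_ne m 0 with rfl | hm
    · norm_num
    · rw [Ring.abs_choose_eq_neg_neg_one_pow_mul ha₀ ha₁ hm, neg_pow, if_neg hm]; ring
  rw [hterm, show 2 - (1 - x) ^ a = -(1 + -x) ^ a + 2 by rw [← sub_eq_add_neg]; ring]
  exact h

theorem Real.summable_abs_choose {a : ℝ} (ha₀ : 0 < a) (ha₁ : a < 1) :
    Summable (fun m => |Ring.choose a m|) := by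
  refine summable_of_sum_range_le (c := 2) (fun _ => abs_nonneg _) fun n => ?_
  have hbound : ∀ x ∈ Set.Ico (0 : ℝ) 1, ∑ m ∈ range n, |Ring.choose a m| * x ^ m ≤ 2 := fun x hx =>
    (sum_le_hasSum _ (fun m _ => by have := hx.1; positivity)
      (Real.hasSum_abs_choose_mul_pow ha₀ ha₁ hx.1 hx.2)).trans
      (by have := Real.rpow_nonneg (sub_nonneg.2 hx.2.le) a; linarith)
  have hlim : Filter.Tendsto (fun x : ℝ => ∑ m ∈ range n, |Ring.choose a m| * x ^ m)
      (nhdsWithin 1 (Set.Iio 1)) (nhds (∑ m ∈ range n, |Ring.choose a m|)) := by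
    have hc : Continuous (fun x : ℝ => ∑ m ∈ range n, |Ring.choose a m| * x ^ m) := by fun_prop
    simpa using (hc.tendsto 1).mono_left nhdsWithin_le_nhds
  exact le_of_tendsto hlim (Filter.mem_of_superset (Ioo_mem_nhdsLT zero_lt_one)
    fun x hx => hbound x ⟨hx.1.le, hx.2⟩)

theorem integral_exp_int_mul_mul_I (n : ℤ) :
    ∫ θ in (0 : ℝ)..(2 * Real.pi), exp (n * θ * I) = if n = 0 then (2 * Real.pi : ℂ) else 0 := by
  split_ifs with hn
  · simp [hn]
  have hc : (n : ℂ) * I ≠ 0 := mul_ne_zero (Int.cast_ne_zero.2 hn) I_ne_zero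
  simp_rw [mul_right_comm _ _ I]
  rw [integral_exp_mul_complex hc]
  have h : (n : ℂ) * I * ((2 * Real.pi : ℝ) : ℂ) = n * (2 * Real.pi * I) := by push_cast; ring
  rw [h, exp_int_mul_two_pi_mul_I]
  simp

/-- The coefficient of `z ^ ℓ` in `(z + 2 + z⁻¹) ^ m = (1 + z) ^ (2 * m) * z ^ (-m)`, that is
`(2 * m).choose (m + ℓ)` when `|ℓ| ≤ m` and `0` otherwise. -/
def shiftedChoose (m : ℕ) (ℓ : ℤ) : ℕ :=
  ∑ j ∈ range (2 * m + 1), if (j : ℤ) = m + ℓ then (2 * m).choose j else 0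

theorem shiftedChoose_zero_left {ℓ : ℤ} (hℓ : ℓ ≠ 0) : shiftedChoose 0 ℓ = 0 := by
  simp [shiftedChoose, Ne.symm hℓ]

theorem shiftedChoose_natAbs_pos (ℓ : ℤ) : 0 < shiftedChoose ℓ.natAbs ℓ := by
  refine sum_pos' (fun _ _ => by positivity) ⟨(ℓ.natAbs + ℓ).toNat, ?_, ?_⟩
  · rw [mem_range]; omega
  · rw [if_pos (by omega)]; exact Nat.choose_pos (by omega)

theorem ofReal_cos_half_sq (θ : ℝ) :
    ((Real.cos (θ / 2) ^ 2 : ℝ) : ℂ) = (1 + exp (θ * I)) ^ 2 / (4 * exp (θ * I)) := by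
  have hz := exp_ne_zero (θ * I)
  have hcos : cos θ = (exp (θ * I) + (exp (θ * I))⁻¹) / 2 := by
    have h := two_cos (θ : ℂ)
    rw [neg_mul, exp_neg] at h
    linear_combination h / 2
  push_cast
  rw [cos_sq, show 2 * ((θ : ℂ) / 2) = θ by ring, hcos]
  field_simp
  ring

theorem cos_half_sq_pow_mul_exp_eq_sum (m : ℕ) (ℓ : ℤ) (θ : ℝ) :
    (((Real.cos (θ / 2) ^ 2) ^ m : ℝ) : ℂ) * exp (-ℓ * θ * I)
      = ∑ j ∈ range (2 * m + 1),
          (4⁻¹ ^ m * (2 * m).choose j : ℂ) * exp ((j - m - ℓ : ℤ) * θ * I) := by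
  set z := exp (θ * I)
  have hz : z ≠ 0 := exp_ne_zero _
  have hexp : ∀ n : ℤ, exp (n * θ * I) = z ^ n := fun n => by rw [mul_assoc, exp_int_mul]
  have hrhs : ∑ j ∈ range (2 * m + 1), (4⁻¹ ^ m * (2 * m).choose j : ℂ) * z ^ (j - m - ℓ : ℤ)
      = 4⁻¹ ^ m * (z ^ m)⁻¹ * (z ^ ℓ)⁻¹ * (z + 1) ^ (2 * m) := by
    rw [add_pow, mul_sum]
    refine sum_congr rfl fun j _ => ?_
    rw [zpow_sub₀ hz, zpow_sub₀ hz]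
    simp only [zpow_natCast, one_pow, mul_one]
    field_simp
  simp_rw [hexp]
  have hcos : cos (θ / 2) ^ 2 = (1 + z) ^ 2 / (4 * z) := by exact_mod_cast ofReal_cos_half_sq θ
  rw [hrhs, show -(ℓ : ℂ) = ((-ℓ : ℤ) : ℂ) by push_cast; ring, hexp, zpow_neg, pow_mul]
  push_cast
  rw [hcos, div_eq_mul_inv, mul_inv, mul_pow, mul_pow, inv_pow, inv_pow]
  ring

theorem integral_cos_half_sq_pow_mul_exp (m : ℕ) (ℓ : ℤ) :
    ∫ θ in (0 : ℝ)..(2 * Real.pi), (((Real.cos (θ / 2) ^ 2) ^ m : ℝ) : ℂ) * exp (-ℓ * θ * I)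
      = 2 * Real.pi * 4⁻¹ ^ m * shiftedChoose m ℓ := by
  simp_rw [cos_half_sq_pow_mul_exp_eq_sum]
  rw [intervalIntegral.integral_finsetSum fun j _ =>
    Continuous.intervalIntegrable (by fun_prop) _ _]
  simp_rw [intervalIntegral.integral_const_mul, integral_exp_int_mul_mul_I, mul_ite, mul_zero]
  simp only [shiftedChoose, Nat.cast_sum, Nat.cast_ite, Nat.cast_zero, mul_sum]
  refine sum_congr rfl fun j _ => ?_
  split_ifs <;> first | omega | ring

theorem norm_exp_mul_I_sub_one_div_two_rpow (p θ : ℝ) :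
    ‖(exp (θ * I) - 1) / 2‖ ^ p = (1 - Real.cos (θ / 2) ^ 2) ^ (p / 2) := by
  rw [norm_div, mul_comm, norm_exp_I_mul_ofReal_sub_one, Complex.norm_two, norm_mul,
    Real.norm_two, mul_div_cancel_left₀ _ two_ne_zero, ← Real.sin_sq, Real.norm_eq_abs,
    ← sq_abs, ← Real.rpow_natCast, ← Real.rpow_mul (abs_nonneg _), Nat.cast_ofNat,
    mul_div_cancel₀ p two_ne_zero]

theorem Real.hasSum_choose_mul_neg_cos_half_sq_pow (a : ℝ) {θ : ℝ}
    (hθ : θ ∈ Set.Ioo 0 (2 * Real.pi)) :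
    HasSum (fun m => Ring.choose a m * (-1) ^ m * (Real.cos (θ / 2) ^ 2) ^ m)
      ((1 - Real.cos (θ / 2) ^ 2) ^ a) := by
  have hsin : 0 < Real.sin (θ / 2) := Real.sin_pos_of_pos_of_lt_pi (by linarith [hθ.1])
    (by linarith [hθ.2])
  have hy : |-Real.cos (θ / 2) ^ 2| < 1 := by
    rw [abs_neg, abs_of_nonneg (sq_nonneg _), Real.cos_sq']
    nlinarith
  simpa [mul_assoc, ← mul_pow, sub_eq_add_neg] using Real.hasSum_choose_mul_pow (a := a) hy

theorem hasSum_laurentCoeff_norm_sub_one_div_two_rpow {p : ℝ} (hp₀ : 0 < p) (hp₂ : p < 2)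
    (ℓ : ℤ) :
    HasSum (fun m => ((Ring.choose (p / 2) m * (-4⁻¹) ^ m * shiftedChoose m ℓ : ℝ) : ℂ))
      (laurentCoeff (fun z => ‖(z - 1) / 2‖ ^ p) ℓ) := by
  set a := p / 2
  have ha₀ : 0 < a := half_pos hp₀
  have ha₁ : a < 1 := by rw [div_lt_one two_pos]; exact hp₂
  set F : ℕ → ℝ → ℂ := fun m θ =>
    ((Ring.choose a m * (-1) ^ m : ℝ) : ℂ) *
      ((((Real.cos (θ / 2) ^ 2) ^ m : ℝ) : ℂ) * exp (-ℓ * θ * I))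
  have hF : ∀ m, ∀ θ, ‖F m θ‖ ≤ |Ring.choose a m| := fun m θ => by
    have hexp : ‖exp (-ℓ * θ * I)‖ = 1 := by
      rw [norm_exp]; simp
    have hcos : (|Real.cos (θ / 2)| ^ 2) ^ m ≤ 1 :=
      pow_le_one₀ (by positivity) (pow_le_one₀ (abs_nonneg _) (Real.abs_cos_le_one _))
    simp only [F, norm_mul, hexp, Complex.norm_real, Real.norm_eq_abs, abs_pow, abs_neg,
      abs_one, one_pow, mul_one]
    exact mul_le_of_le_one_right (abs_nonneg _) hcos
  have hsum : HasSum (fun m => ∫ θ in (0 : ℝ)..(2 * Real.pi), F m θ)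
      (∫ θ in (0 : ℝ)..(2 * Real.pi), ((‖(exp (θ * I) - 1) / 2‖ ^ p : ℝ) : ℂ) * exp (-ℓ * θ * I)) :=
    intervalIntegral.hasSum_integral_of_dominated_convergence
      (fun m _ => |Ring.choose a m|) (fun m => Continuous.aestronglyMeasurable (by fun_prop))
      (fun m => Filter.Eventually.of_forall fun θ _ => hF m θ)
      (Filter.Eventually.of_forall fun _ _ => Real.summable_abs_choose ha₀ ha₁)
      intervalIntegrable_const
      (by
        filter_upwards [Measure.ae_ne volume (2 * Real.pi)] with θ hne hθ
        rw [Set.uIoc_of_le (by positivity)] at hθ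
        have h := (Complex.hasSum_ofReal.2 (Real.hasSum_choose_mul_neg_cos_half_sq_pow a
          ⟨hθ.1, lt_of_le_of_ne hθ.2 hne⟩)).mul_right (exp (-ℓ * θ * I))
        simp only [F]
        rw [norm_exp_mul_I_sub_one_div_two_rpow]
        push_cast at h ⊢
        simpa only [mul_assoc] using h)
  have hterm : ∀ m, (1 / (2 * Real.pi) : ℂ) * ∫ θ in (0 : ℝ)..(2 * Real.pi), F m θ
      = ((Ring.choose a m * (-4⁻¹) ^ m * shiftedChoose m ℓ : ℝ) : ℂ) := fun m => by
    rw [intervalIntegral.integral_const_mul, integral_cos_half_sq_pow_mul_exp, neg_pow (4⁻¹ : ℝ)]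
    have : (Real.pi : ℂ) ≠ 0 := ofReal_ne_zero.2 Real.pi_ne_zero
    push_cast
    field_simp
  rw [laurentCoeff]
  simpa only [hterm] using hsum.mul_left (1 / (2 * Real.pi) : ℂ)

theorem laurentCoeff_norm_sub_one_div_two_rpow_neg {p : ℝ} (hp₀ : 0 < p) (hp₂ : p < 2) {ℓ : ℤ}
    (hℓ : ℓ ≠ 0) : ∃ c : ℝ, c < 0 ∧ laurentCoeff (fun z => ‖(z - 1) / 2‖ ^ p) ℓ = c := by
  set d : ℕ → ℝ := fun m => Ring.choose (p / 2) m * (-4⁻¹) ^ m * shiftedChoose m ℓ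
  have hsum := hasSum_laurentCoeff_norm_sub_one_div_two_rpow hp₀ hp₂ ℓ
  have hd : HasSum d (∑' m, d m) := (Complex.summable_ofReal.1 hsum.summable).hasSum
  have hneg : ∀ m ≠ 0, Ring.choose (p / 2) m * (-4⁻¹) ^ m < 0 := fun m hm => by
    rw [neg_pow, ← mul_assoc, mul_comm (Ring.choose _ _)]
    exact mul_neg_of_neg_of_pos
      (Ring.neg_one_pow_mul_choose_neg (half_pos hp₀) (by linarith) hm) (by positivity)
  have hd_nonpos : d ≤ 0 := fun m => by
    rcases eq_or_ne m 0 with rfl | hm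
    · simp [d, shiftedChoose_zero_left hℓ]
    · exact mul_nonpos_of_nonpos_of_nonneg (hneg m hm).le (Nat.cast_nonneg _)
  have hd_neg : d ℓ.natAbs < 0 := mul_neg_of_neg_of_pos (hneg _ (Int.natAbs_ne_zero.2 hℓ))
    (by exact_mod_cast shiftedChoose_natAbs_pos ℓ)
  exact ⟨∑' m, d m, by simpa using hasSum_lt hd_nonpos hd_neg hd hasSum_zero,
    hsum.unique (Complex.hasSum_ofReal.2 hd)⟩

theorem stmt_12 (p : ℝ) (hp : p ∈ Set.Ico (1:ℝ) 2) (k : ℤ) (hk : 1 ≤ k) :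
    (∃ c : ℝ, c < 0 ∧ laurentCoeff (fun z => ‖(z - 1) / 2‖^p) k = (c : ℂ))
    ∧ (∃ c : ℝ, c < 0 ∧
        laurentCoeff (fun z => ‖(z - 1) / 2‖^p) (-k) = (c : ℂ)) := by
  have hp₀ : 0 < p := by linarith [hp.1]
  exact ⟨laurentCoeff_norm_sub_one_div_two_rpow_neg hp₀ hp.2 (by omega),
    laurentCoeff_norm_sub_one_div_two_rpow_neg hp₀ hp.2 (by omega)⟩
end
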